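/- Consider the alphabet {H⁺, H⁻, L} and the substitution σ defined by σ(H⁺) = L H⁺, σ(H⁻) = H⁻ L, σ(L) = H⁺ H⁺ H⁻ H⁻, extended to words (finite lists of letters) by concatenation. Then for every natural number n, every contiguous subword of σⁿ(H⁺) consisting entirely of letters from {H⁺, H⁻} has length at most 6. -/

import Mathlib

/-- The three-letter alphabet {H⁺, H⁻, L}. -/
inductive Letter : Type
  | Hp : Letter
  | Hm : Letter
  | L : Letter
  deriving DecidableEq

/-- The substitution σ on letters: σ(H⁺)=LH⁺, σ(H⁻)=H⁻L, σ(L)=H⁺H⁺H⁻H⁻. -/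
def subst : Letter → List Letter
  | Letter.Hp => [Letter.L, Letter.Hp]
  | Letter.Hm => [Letter.Hm, Letter.L]
  | Letter.L => [Letter.Hp, Letter.Hp, Letter.Hm, Letter.Hm]

/-- The substitution σ extended to words by concatenation. -/
def substWord (w : List Letter) : List Letter := w.flatMap subst

open Letter List

/-- Forbidden adjacencies: no `L L` and no `Hm Hp`. -/
def C (a b : Letter) : Prop := ¬(a = L ∧ b = L) ∧ ¬(a = Hm ∧ b = Hp)

instance : DecidableRel C := fun a b =>
  inferInstanceAs (Decidable (¬(a = L ∧ b = L) ∧ ¬(a = Hm ∧ b = Hp)))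

lemma substWord_nil : substWord [] = [] := rfl

lemma substWord_cons (a : Letter) (t : List Letter) :
    substWord (a :: t) = subst a ++ substWord t := rfl

lemma chainC_subst (a : Letter) : Chain' C (subst a) := by
  cases a <;> simp [subst, C, List.isChain_cons_cons, Chain']

lemma junction {a b : Letter} (h : C a b) :
    ∀ x ∈ (subst a).getLast?, ∀ y ∈ (subst b).head?, C x y := by
  revert h; cases a <;> cases b <;> simp [subst, C, Option.mem_def]

lemma chain_substWord : ∀ w : List Letter, Chain' C w → Chain' C (substWord w) := by
  intro w
  induction w with
  | nil => intro _; simp [substWord, Chain']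
  | cons a t ih =>
    intro h
    rw [substWord_cons, Chain', List.isChain_append]
    refine ⟨chainC_subst a, ih h.tail, ?_⟩
    intro x hx y hy
    cases t with
    | nil => simp [substWord] at hy
    | cons b t' =>
      have hab : C a b := (List.isChain_cons_cons.mp h).1
      have hy' : y ∈ (subst b).head? := by
        rw [substWord_cons] at hy
        cases b <;> simpa [subst] using hy
      exact junction hab x hx y hy'

lemma inv (n : ℕ) : Chain' C (substWord^[n] [Hp]) := by
  induction n with
  | zero => simp [Chain']
  | succ n ih => rw [Function.iterate_succ_apply']; exact chain_substWord _ ih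

/-- bound on the length of an all-H prefix of `substWord t` in terms of the head of `t`. -/
def headBound : List Letter → ℕ
  | [] => 0
  | Hp :: _ => 0
  | Hm :: _ => 1
  | L :: _ => 5

lemma headBound_le (t : List Letter) : headBound t ≤ 5 := by
  cases t with
  | nil => simp [headBound]
  | cons a t => cases a <;> simp [headBound]

lemma prefix_bound : ∀ t : List Letter, Chain' C t → ∀ u, u <+: substWord t →
    (∀ x ∈ u, x = Hp ∨ x = Hm) → u.length ≤ headBound t := by
  intro t
  induction t with
  | nil =>
    intro _ u hu _
    rw [substWord_nil, List.prefix_nil] at hu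
    simp [hu, headBound]
  | cons a t ih =>
    intro h u hu hH
    cases a with
    | Hp =>
      rw [substWord_cons] at hu
      cases u with
      | nil => simp [headBound]
      | cons x u' =>
        have hx := (List.cons_prefix_cons.mp hu).1
        have := hH x (by simp)
        subst hx
        rcases this with h' | h' <;> simp at h'
    | Hm =>
      rw [substWord_cons] at hu
      cases u with
      | nil => simp [headBound]
      | cons x u' =>
        have hu' := (List.cons_prefix_cons.mp hu).2
        cases u' with
        | nil => simp [headBound]
        | cons y u'' =>
          have hy := (List.cons_prefix_cons.mp hu').1
          have := hH y (by simp)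
          subst hy
          rcases this with h' | h' <;> simp at h'
    | L =>
      rw [substWord_cons] at hu
      have hdrop : u.drop 4 <+: substWord t := by
        have := hu.drop 4
        simpa [subst] using this
      have hH' : ∀ x ∈ u.drop 4, x = Hp ∨ x = Hm := fun x hx => hH x (List.mem_of_mem_drop hx)
      have hlen := ih h.tail (u.drop 4) hdrop hH'
      have hb : headBound t ≤ 1 := by
        cases t with
        | nil => simp [headBound]
        | cons b t' =>
          cases b with
          | Hp => simp [headBound]
          | Hm => simp [headBound]
          | L =>
            have := (List.isChain_cons_cons.mp h).1
            exact absurd ⟨rfl, rfl⟩ this.1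
      have := List.length_drop (i := 4) (l := u)
      simp [headBound]
      omega

lemma suffix_allH_bound : ∀ a : Letter, ∀ u : List Letter, u <:+ subst a →
    (∀ x ∈ u, x = Hp ∨ x = Hm) →
    (a = Hp → u.length ≤ 1) ∧ (a = Hm → u.length ≤ 0) ∧ (a = L → u.length ≤ 4) := by
  intro a u hu hH
  cases a with
  | Hp =>
    have h := (List.mem_tails _ _).mpr hu
    simp [subst, List.tails] at h
    rcases h with rfl | rfl | rfl
    · exact absurd (hH L (by simp)) (by simp)
    · simp
    · simp
  | Hm =>
    have h := (List.mem_tails _ _).mpr hu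
    simp [subst, List.tails] at h
    rcases h with rfl | rfl | rfl
    · exact absurd (hH L (by simp)) (by simp)
    · exact absurd (hH L (by simp)) (by simp)
    · simp
  | L =>
    have := hu.length_le
    simp [subst] at this
    simp [this]

lemma infix_append_or {α : Type*} {u l₁ l₂ : List α} (h : u <:+: (l₁ ++ l₂)) :
    u <:+: l₁ ∨ u <:+: l₂ ∨ ∃ u₁ u₂, u = u₁ ++ u₂ ∧ u₁ <:+ l₁ ∧ u₂ <+: l₂ := by
  obtain ⟨s, t, hst⟩ := h
  rw [List.append_assoc] at hst
  rcases List.append_eq_append_iff.mp hst with ⟨a', h1, h2⟩ | ⟨c', h1, h2⟩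
  · rcases List.append_eq_append_iff.mp h2 with ⟨b, hb1, hb2⟩ | ⟨d, hd1, hd2⟩
    · left
      exact ⟨s, b, by rw [h1, hb1, List.append_assoc]⟩
    · right; right
      exact ⟨a', d, hd1, ⟨s, h1.symm⟩, ⟨t, hd2.symm⟩⟩
  · right; left
    exact ⟨c', t, by rw [h2, List.append_assoc]⟩

lemma infix_bound : ∀ w : List Letter, Chain' C w → ∀ u, u <:+: substWord w →
    (∀ x ∈ u, x = Hp ∨ x = Hm) → u.length ≤ 6 := by
  intro w
  induction w with
  | nil =>
    intro _ u hu _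
    rw [substWord_nil] at hu
    have := hu.length_le
    simpa using Nat.le_trans this (by norm_num)
  | cons a t ih =>
    intro h u hu hH
    rw [substWord_cons] at hu
    rcases infix_append_or hu with h1 | h1 | ⟨u₁, u₂, rfl, hs, hp⟩
    · have := h1.length_le
      have h4 : (subst a).length ≤ 4 := by cases a <;> simp [subst]
      omega
    · exact ih h.tail u h1 hH
    · have hH1 : ∀ x ∈ u₁, x = Hp ∨ x = Hm := fun x hx => hH x (by simp [hx])
      have hH2 : ∀ x ∈ u₂, x = Hp ∨ x = Hm := fun x hx => hH x (by simp [hx])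
      have hp2 := prefix_bound t h.tail u₂ hp hH2
      have hs1 := suffix_allH_bound a u₁ hs hH1
      have hb5 := headBound_le t
      cases a with
      | Hp =>
        have := hs1.1 rfl
        simp only [List.length_append]
        omega
      | Hm =>
        have := hs1.2.1 rfl
        simp only [List.length_append]
        omega
      | L =>
        have h4 := hs1.2.2 rfl
        have hb : headBound t ≤ 1 := by
          cases t with
          | nil => simp [headBound]
          | cons b t' =>
            cases b with
            | Hp => simp [headBound]
            | Hm => simp [headBound]
            | L =>
              have := (List.isChain_cons_cons.mp h).1
              exact absurd ⟨rfl, rfl⟩ this.1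
        simp only [List.length_append]
        omega

theorem stmt_6 (n : ℕ) (u : List Letter) (hu : u <:+: substWord^[n] [Letter.Hp])
    (hH : ∀ x ∈ u, x = Letter.Hp ∨ x = Letter.Hm) :
    u.length ≤ 6 := by
  cases n with
  | zero =>
    simp only [Function.iterate_zero_apply] at hu
    have := hu.length_le
    simp at this
    omega
  | succ n =>
    rw [Function.iterate_succ_apply'] at hu
    exact infix_bound _ (inv n) u hu hH
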